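/- arXiv:2511.18402 — 6 statements merged into one kernel-verified Lean document; each statement's English description precedes it below -/
import Mathlib

section
/- Let X ⊆ ℝⁿ, let φ : ℝⁿ → ℝⁿ be a bijection with φ(0) = 0 satisfying (1/K)‖x‖^(1/α) ≤ ‖φ(x)‖ ≤ K‖x‖^α and ‖φ(x)-φ(y)‖ ≤ K‖x-y‖^α for all x,y near 0, where α ∈ (0,1] and K ≥ 1. Then for every d > 1 and C > 0 there exists C₂ > 0 such that φ(ST_d(X,C)) ⊆ ST_{dα²}(φ(X), C₂) as germs at 0, where ST_d(X,C) := {x : dist(x,X) ≤ C‖x‖^d}. -/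
open Metric Set

/-- The sea-tangle neighborhood of `X` of degree `d` and width `C`. -/
def seaTangle {n : ℕ} (d C : ℝ) (X : Set (EuclideanSpace ℝ (Fin n))) :
    Set (EuclideanSpace ℝ (Fin n)) :=
  {x | Metric.infDist x X ≤ C * ‖x‖ ^ d}

/-!
A point `x` of `ST_d(X, C)` has a point of `X` at distance about `C‖x‖^d`; the Hölder bound carries
this to `dist(φ x, φ(X)) ≲ K (C‖x‖^d)^α`. The lower bound `‖x‖^(1/α) ≤ K‖φ x‖` turns `‖x‖^(dα)`
into `(K‖φ x‖)^(dα²)`, which gives the degree `dα²`.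
-/

open Filter Topology

theorem infDist_image_le_of_holderAt {E F : Type*} [PseudoMetricSpace E] [PseudoMetricSpace F]
    {f : E → F} {X : Set E} {x : E} {K α r : ℝ} (hK : 0 ≤ K) (hα : 0 ≤ α)
    (hr : infDist x X < r) (hf : ∀ y ∈ X, dist x y < r → dist (f x) (f y) ≤ K * dist x y ^ α) :
    infDist (f x) (f '' X) ≤ K * infDist x X ^ α := by
  rcases X.eq_empty_or_nonempty with rfl | hX
  · simp only [image_empty, infDist_empty]
    positivity
  have hbound : ∀ t, infDist x X < t → t < r → infDist (f x) (f '' X) ≤ K * t ^ α := by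
    intro t ht htr
    obtain ⟨y, hy, hxy⟩ := (infDist_lt_iff hX).1 ht
    calc infDist (f x) (f '' X) ≤ dist (f x) (f y) := infDist_le_dist_of_mem (mem_image_of_mem f hy)
      _ ≤ K * dist x y ^ α := hf y hy (hxy.trans htr)
      _ ≤ K * t ^ α := by gcongr
  have hlim : Tendsto (fun t : ℝ => K * t ^ α) (𝓝[>] (infDist x X)) (𝓝 (K * infDist x X ^ α)) :=
    (((Real.continuousAt_rpow_const _ _ (Or.inr hα)).const_mul K).tendsto).mono_left
      nhdsWithin_le_nhds
  refine ge_of_tendsto hlim ?_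
  filter_upwards [self_mem_nhdsWithin, nhdsWithin_le_nhds (Iio_mem_nhds hr)] with t ht htr
  exact hbound t ht htr

theorem stmt_2_general (n : ℕ) (X : Set (EuclideanSpace ℝ (Fin n)))
    (φ : EuclideanSpace ℝ (Fin n) → EuclideanSpace ℝ (Fin n))
    (α K : ℝ) (hα : 0 < α) (hK : 1 ≤ K)
    (δ : ℝ) (hδ : 0 < δ)
    (hnorm : ∀ x ∈ ball (0 : EuclideanSpace ℝ (Fin n)) δ,
      (1 / K) * ‖x‖ ^ (1 / α) ≤ ‖φ x‖ ∧ ‖φ x‖ ≤ K * ‖x‖ ^ α)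
    (hHolder : ∀ x ∈ ball (0 : EuclideanSpace ℝ (Fin n)) δ,
      ∀ y ∈ ball (0 : EuclideanSpace ℝ (Fin n)) δ,
      ‖φ x - φ y‖ ≤ K * ‖x - y‖ ^ α) :
    ∀ d C : ℝ, 1 < d → 0 < C →
      ∃ C₂ : ℝ, 0 < C₂ ∧ ∃ ε : ℝ, 0 < ε ∧
        ∀ x ∈ seaTangle d C X ∩ ball (0 : EuclideanSpace ℝ (Fin n)) ε,
          φ x ∈ seaTangle (d * α ^ 2) C₂ (φ '' X) := by
  intro d C hd hC
  have hK0 : 0 < K := by linarith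
  -- `‖x‖ < 1` gives `‖x‖^d ≤ ‖x‖`, and `(1 + C)‖x‖ < δ` keeps the points of `X` near `x` in the ball.
  refine ⟨K * C ^ α * K ^ (d * α ^ 2), by positivity, min 1 (δ / (1 + C)), by positivity, ?_⟩
  rintro x ⟨hxX, hxε⟩
  obtain ⟨hx1, hxδ⟩ := lt_min_iff.1 (mem_ball_zero_iff.1 hxε)
  change infDist x X ≤ C * ‖x‖ ^ d at hxX
  have hnear : infDist x X < δ - ‖x‖ := by
    have := Real.rpow_le_self_of_le_one (norm_nonneg x) hx1.le hd.le
    rw [lt_div_iff₀ (by positivity)] at hxδ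
    nlinarith
  have hxB : x ∈ ball (0 : EuclideanSpace ℝ (Fin n)) δ :=
    mem_ball_zero_iff.2 (by linarith [infDist_nonneg (x := x) (s := X)])
  have hdist : infDist (φ x) (φ '' X) ≤ K * infDist x X ^ α := by
    refine infDist_image_le_of_holderAt hK0.le hα.le hnear fun y _ hxy => ?_
    have hyB : y ∈ ball (0 : EuclideanSpace ℝ (Fin n)) δ :=
      ball_subset_ball' (by rw [dist_zero_right]; linarith) (mem_ball'.2 hxy)
    simpa only [dist_eq_norm] using hHolder x hxB y hyB
  have hxφ : ‖x‖ ≤ (K * ‖φ x‖) ^ α := by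
    have hlower := (hnorm x hxB).1
    rw [one_div_mul_eq_div, div_le_iff₀' hK0] at hlower
    rwa [← Real.rpow_inv_le_iff_of_pos (norm_nonneg x) (by positivity) hα, ← one_div]
  show infDist (φ x) (φ '' X) ≤ K * C ^ α * K ^ (d * α ^ 2) * ‖φ x‖ ^ (d * α ^ 2)
  calc infDist (φ x) (φ '' X) ≤ K * infDist x X ^ α := hdist
    _ ≤ K * (C * ‖x‖ ^ d) ^ α := by gcongr; exact infDist_nonneg
    _ = K * C ^ α * ‖x‖ ^ (d * α) := by
      rw [Real.mul_rpow hC.le (by positivity), ← Real.rpow_mul (norm_nonneg x)]; ring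
    _ ≤ K * C ^ α * ((K * ‖φ x‖) ^ α) ^ (d * α) := by gcongr
    _ = K * C ^ α * K ^ (d * α ^ 2) * ‖φ x‖ ^ (d * α ^ 2) := by
      rw [← Real.rpow_mul (by positivity), Real.mul_rpow hK0.le (norm_nonneg _)]; ring_nf

/-- a bi-α-Hölder homeomorphism germ of (ℝⁿ,0) maps `seaTangle_d(X,C)` into
`seaTangle_{dα²}(φ(X), C₂)` as germs at 0. -/
theorem stmt_2 (n : ℕ) (X : Set (EuclideanSpace ℝ (Fin n)))
    (φ : EuclideanSpace ℝ (Fin n) → EuclideanSpace ℝ (Fin n))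
    (hbij : Function.Bijective φ) (hφ0 : φ 0 = 0)
    (α K : ℝ) (hα : 0 < α) (hα1 : α ≤ 1) (hK : 1 ≤ K)
    (δ : ℝ) (hδ : 0 < δ)
    (hnorm : ∀ x ∈ ball (0 : EuclideanSpace ℝ (Fin n)) δ,
      (1 / K) * ‖x‖ ^ (1 / α) ≤ ‖φ x‖ ∧ ‖φ x‖ ≤ K * ‖x‖ ^ α)
    (hHolder : ∀ x ∈ ball (0 : EuclideanSpace ℝ (Fin n)) δ,
      ∀ y ∈ ball (0 : EuclideanSpace ℝ (Fin n)) δ,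
      ‖φ x - φ y‖ ≤ K * ‖x - y‖ ^ α) :
    ∀ d C : ℝ, 1 < d → 0 < C →
      ∃ C₂ : ℝ, 0 < C₂ ∧ ∃ ε : ℝ, 0 < ε ∧
        ∀ x ∈ seaTangle d C X ∩ ball (0 : EuclideanSpace ℝ (Fin n)) ε,
          φ x ∈ seaTangle (d * α ^ 2) C₂ (φ '' X) :=
  stmt_2_general n X φ α K hα hK δ hδ hnorm hHolder
end

section
/- Every bounded set S ⊆ ℝⁿ of diameter d is contained in a closed ball of radius d/√2. Consequently, the outer Lebesgue measure of S is at most ω_n (d/√2)^n, where ω_n is the volume of the unit ball. -/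
/-!
Let `c` minimise the farthest distance `R(z) = sup_{y ∈ S} |y - z|` (it exists in a proper
space, `R` being 1-Lipschitz and coercive). For `x ∈ S` and `w = (1 - t) c + t x`, the identity
`|y - w|² = (1 - t)|y - c|² + t|y - x|² - t(1 - t)|x - c|²` gives
`R(c)² ≤ R(w)² ≤ (1 - t) R(c)² + t d² - t(1 - t)|x - c|²`; dividing by `t` and letting `t → 0`
yields `|x - c|² ≤ d² - R(c)²`, so `R(c)² ≤ d² - R(c)²`, i.e. `R(c) ≤ d / √2`.
-/

open Metric Set MeasureTheory Filter Topology

section FarthestDist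

variable {α : Type*} [PseudoMetricSpace α] {S : Set α}

noncomputable def farthestDist (S : Set α) (z : α) : ℝ :=
  ⨆ x : S, dist (x : α) z

lemma farthestDist_nonneg (z : α) : 0 ≤ farthestDist S z :=
  Real.iSup_nonneg fun _ => dist_nonneg

lemma dist_le_farthestDist (hS : Bornology.IsBounded S) {x : α} (hx : x ∈ S) (z : α) :
    dist x z ≤ farthestDist S z := by
  obtain ⟨r, hr⟩ := hS.subset_closedBall z
  exact le_ciSup (f := fun y : S => dist (y : α) z)
    ⟨r, by rintro _ ⟨y, rfl⟩; exact hr y.2⟩ ⟨x, hx⟩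

lemma farthestDist_le {z : α} {r : ℝ} (hr : 0 ≤ r) (h : ∀ x ∈ S, dist x z ≤ r) :
    farthestDist S z ≤ r :=
  Real.iSup_le (fun x => h x x.2) hr

lemma lipschitzWith_farthestDist (hS : Bornology.IsBounded S) :
    LipschitzWith 1 (farthestDist S) :=
  LipschitzWith.of_le_add fun z w =>
    farthestDist_le (add_nonneg (farthestDist_nonneg w) dist_nonneg) fun x hx =>
      (dist_triangle x w z).trans <| by
        rw [dist_comm w z]
        exact add_le_add_left (dist_le_farthestDist hS hx w) _

lemma exists_forall_farthestDist_le [ProperSpace α] (hS : Bornology.IsBounded S)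
    (hne : S.Nonempty) : ∃ c, ∀ z, farthestDist S c ≤ farthestDist S z := by
  obtain ⟨x₀, hx₀⟩ := hne
  refine (lipschitzWith_farthestDist hS).continuous.exists_forall_le_of_isBounded x₀ ?_
  refine (isBounded_closedBall (x := x₀) (r := farthestDist S x₀)).subset fun z hz => ?_
  rw [mem_closedBall, dist_comm]
  exact (dist_le_farthestDist hS hx₀ z).trans hz

end FarthestDist

section Jung

variable {E : Type*} [NormedAddCommGroup E] [InnerProductSpace ℝ E]

lemma dist_lineMap_sq (y c z : E) (t : ℝ) :
    dist y (AffineMap.lineMap c z t) ^ 2 =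
      (1 - t) * dist y c ^ 2 + t * dist y z ^ 2 - t * (1 - t) * dist z c ^ 2 := by
  have hyz : y - z = (y - c) - (z - c) := by abel
  have hyw : y - AffineMap.lineMap c z t = (y - c) - t • (z - c) := by
    rw [AffineMap.lineMap_apply_module']; abel
  simp only [dist_eq_norm, hyw, hyz, norm_sub_sq_real, inner_smul_right, norm_smul,
    Real.norm_eq_abs, mul_pow, sq_abs]
  ring

lemma dist_sq_le_diam_sq_sub_farthestDist_sq {S : Set E} (hS : Bornology.IsBounded S) {c : E}
    (hc : ∀ z, farthestDist S c ≤ farthestDist S z) {x : E} (hx : x ∈ S) :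
    dist x c ^ 2 ≤ diam S ^ 2 - farthestDist S c ^ 2 := by
  set R := farthestDist S c
  have hR : 0 ≤ R := farthestDist_nonneg c
  have hstep : ∀ t ∈ Ioo (0 : ℝ) 1, (1 - t) * dist x c ^ 2 ≤ diam S ^ 2 - R ^ 2 := by
    rintro t ⟨ht0, ht1⟩
    set B := (1 - t) * R ^ 2 + t * diam S ^ 2 - t * (1 - t) * dist x c ^ 2
    have hball : ∀ y ∈ S, dist y (AffineMap.lineMap c x t) ^ 2 ≤ B := fun y hy => by
      have hyc := dist_le_farthestDist hS hy c
      have hyx := dist_le_diam_of_mem hS hy hx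
      rw [dist_lineMap_sq]
      nlinarith [pow_le_pow_left₀ dist_nonneg hyc 2, pow_le_pow_left₀ dist_nonneg hyx 2]
    have hB : R ^ 2 ≤ B := by
      have hB0 : 0 ≤ B := (sq_nonneg _).trans (hball x hx)
      have hw : farthestDist S (AffineMap.lineMap c x t) ≤ √B :=
        farthestDist_le (Real.sqrt_nonneg B) fun y hy =>
          (Real.le_sqrt dist_nonneg hB0).2 (hball y hy)
      exact (Real.le_sqrt hR hB0).1 ((hc _).trans hw)
    nlinarith
  have hlim : Tendsto (fun t : ℝ => (1 - t) * dist x c ^ 2) (𝓝[>] 0) (𝓝 (dist x c ^ 2)) := by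
    have : Continuous fun t : ℝ => (1 - t) * dist x c ^ 2 := by fun_prop
    simpa using this.continuousWithinAt (s := Ioi 0) (x := 0) |>.tendsto
  exact le_of_tendsto hlim (eventually_of_mem (Ioo_mem_nhdsGT one_pos) hstep)

theorem exists_subset_closedBall_diam_div_sqrt_two [ProperSpace E] {S : Set E}
    (hS : Bornology.IsBounded S) : ∃ c, S ⊆ closedBall c (diam S / √2) := by
  rcases S.eq_empty_or_nonempty with rfl | hne
  · exact ⟨0, empty_subset _⟩
  obtain ⟨c, hc⟩ := exists_forall_farthestDist_le hS hne
  have hR : 0 ≤ farthestDist S c := farthestDist_nonneg c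
  have hsq : farthestDist S c ^ 2 ≤ diam S ^ 2 - farthestDist S c ^ 2 := by
    obtain ⟨x, hx⟩ := hne
    have h0 := (sq_nonneg _).trans (dist_sq_le_diam_sq_sub_farthestDist_sq hS hc hx)
    refine (Real.le_sqrt hR h0).1 (farthestDist_le (Real.sqrt_nonneg _) fun y hy => ?_)
    exact (Real.le_sqrt dist_nonneg h0).2 (dist_sq_le_diam_sq_sub_farthestDist_sq hS hc hy)
  have hRd : farthestDist S c ≤ diam S / √2 := by
    rw [le_div_iff₀ (by positivity)]
    nlinarith [Real.sq_sqrt (zero_le_two (α := ℝ)), Real.sqrt_nonneg 2, diam_nonneg (s := S)]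
  exact ⟨c, fun x hx => (dist_le_farthestDist hS hx c).trans hRd⟩

end Jung

lemma MeasureTheory.Measure.addHaar_closedBall_eq_ofReal {E : Type*} [NormedAddCommGroup E]
    [NormedSpace ℝ E] [MeasurableSpace E] [BorelSpace E] [FiniteDimensional ℝ E]
    (μ : Measure E) [μ.IsAddHaarMeasure] (c : E) {r : ℝ} (hr : 0 ≤ r) :
    μ (closedBall c r) = ENNReal.ofReal ((μ (ball 0 1)).toReal * r ^ Module.finrank ℝ E) := by
  rw [Measure.addHaar_closedBall μ c hr, ENNReal.ofReal_mul ENNReal.toReal_nonneg,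
    ENNReal.ofReal_toReal measure_ball_lt_top.ne, mul_comm]

/-- weak Jung theorem: every bounded set of diameter d in ℝⁿ is contained
in a closed ball of radius d/√2; consequently its outer measure is at most
ω_n (d/√2)^n. -/
theorem stmt_6 (n : ℕ) (S : Set (EuclideanSpace ℝ (Fin n)))
    (hS : Bornology.IsBounded S) (d : ℝ) (hd : Metric.diam S = d) :
    (∃ c : EuclideanSpace ℝ (Fin n), S ⊆ Metric.closedBall c (d / Real.sqrt 2)) ∧
    volume S ≤
      ENNReal.ofReal
        ((volume (Metric.ball (0 : EuclideanSpace ℝ (Fin n)) 1)).toReal *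
          (d / Real.sqrt 2) ^ (n : ℕ)) := by
  obtain ⟨c, hc⟩ := exists_subset_closedBall_diam_div_sqrt_two hS
  rw [hd] at hc
  have hρ : 0 ≤ d / √2 := by rw [← hd]; positivity
  refine ⟨⟨c, hc⟩, ?_⟩
  calc volume S ≤ volume (closedBall c (d / √2)) := measure_mono hc
    _ = _ := by rw [Measure.addHaar_closedBall_eq_ofReal volume c hρ, finrank_euclideanSpace_fin]
end

section
/- Let X ⊆ ℝⁿ and Y ⊆ ℝⁿ be germs at 0 admitting a bi-α-Hölder homeomorphism h : (X,0) → (Y,0) with α ∈ (0,1]. Then there exists a bi-α²-Hölder homeomorphism Φ : (ℝ²ⁿ,0) → (ℝ²ⁿ,0) such that Φ(X × {0}) = {0} × Y and Φ(x,0) = (0, h(x)) for all x ∈ X near 0. -/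
/-!
An `α`-Hölder map is Lipschitz for the `α`-snowflaked metric `d ^ α`, so the McShane–Whitney
extension theorem extends `h` and its inverse `g` (which is `α`-Hölder on `Y` by the lower
Hölder bound on `h`) to `α`-Hölder maps `h̃`, `k̃` on all of `ℝⁿ`. The map
`Φ (u, v) = (u - k̃ (v + h̃ u), v + h̃ u)` is the composite of the shears `(u, v) ↦ (u, v + h̃ u)`
and `(z, w) ↦ (z - k̃ w, w)`, whose inverses are shears of the same kind. Each shear moves points
at distance `D` to distance at most `D + K * D ^ α`, and two such steps give `C * D ^ (α ^ 2)` when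
`D ≤ 1`; applied to `Φ` and to `Φ⁻¹` this makes `Φ` bi-`α²`-Hölder near `0`. Finally
`Φ (x, 0) = (x - g (h x), h x) = (0, h x)` for `x ∈ X`.
-/

open Metric Set Function
open scoped NNReal

section Holder

variable {X Y : Type*} [PseudoMetricSpace X] [PseudoMetricSpace Y]

theorem HolderOnWith.of_dist_le {C r : ℝ≥0} {f : X → Y} {s : Set X}
    (h : ∀ x ∈ s, ∀ y ∈ s, dist (f x) (f y) ≤ C * dist x y ^ (r : ℝ)) :
    HolderOnWith C r f s := fun x hx y hy => by
  rw [edist_dist, edist_dist, ENNReal.ofReal_rpow_of_nonneg dist_nonneg r.coe_nonneg,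
    ← ENNReal.ofReal_coe_nnreal, ← ENNReal.ofReal_mul C.coe_nonneg]
  exact ENNReal.ofReal_le_ofReal (h x hx y hy)

theorem HolderWith.neg {E : Type*} [SeminormedAddCommGroup E] {C r : ℝ≥0} {f : X → E}
    (hf : HolderWith C r f) : HolderWith C r (-f) := fun x y => by
  simpa only [Pi.neg_apply, edist_neg_neg] using hf x y

theorem HolderOnWith.extend_finite_dimension {E : Type*} [NormedAddCommGroup E]
    [NormedSpace ℝ E] [FiniteDimensional ℝ E] {C r : ℝ≥0} {f : X → E} {s : Set X}
    (hr₀ : 0 < r) (hr₁ : r ≤ 1) (hf : HolderOnWith C r f s) :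
    ∃ g : X → E, HolderWith (lipschitzExtensionConstant E * C) r g ∧ EqOn f g s := by
  have hf' : LipschitzOnWith C
      (f ∘ Snowflaking.ofSnowflaking : Snowflaking X r (mod_cast hr₀) (mod_cast hr₁) → E)
      (Snowflaking.ofSnowflaking ⁻¹' s) := fun a ha b hb => hf _ ha _ hb
  obtain ⟨g, hg, hfg⟩ := hf'.extend_finite_dimension
  exact ⟨g ∘ Snowflaking.toSnowflaking, fun x y => hg _ _,
    fun x hx => hfg (x := .toSnowflaking x) hx⟩

theorem Set.LeftInvOn.holderOnWith_of_rpow_inv_le {h : X → Y} {g : Y → X} {s : Set X}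
    {t : Set Y} {L r : ℝ≥0} (hhg : LeftInvOn h g t) (hg : MapsTo g t s) (hr : 0 < r)
    (hh : ∀ x₁ ∈ s, ∀ x₂ ∈ s, dist x₁ x₂ ^ (r⁻¹ : ℝ) ≤ L * dist (h x₁) (h x₂)) :
    HolderOnWith (L ^ (r : ℝ)) r g t := by
  refine HolderOnWith.of_dist_le fun y₁ hy₁ y₂ hy₂ => ?_
  have hle := hh _ (hg hy₁) _ (hg hy₂)
  rw [hhg hy₁, hhg hy₂] at hle
  calc dist (g y₁) (g y₂) = (dist (g y₁) (g y₂) ^ (r⁻¹ : ℝ)) ^ (r : ℝ) := by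
        rw [Real.rpow_inv_rpow dist_nonneg (NNReal.coe_ne_zero.2 hr.ne')]
    _ ≤ (L * dist y₁ y₂) ^ (r : ℝ) := by gcongr
    _ = _ := by rw [NNReal.coe_rpow, Real.mul_rpow L.coe_nonneg dist_nonneg]

end Holder

theorem add_mul_rpow_le_one_add_mul_rpow {D K α : ℝ} (hD₀ : 0 ≤ D) (hD₁ : D ≤ 1) (hα₁ : α ≤ 1) :
    D + K * D ^ α ≤ (1 + K) * D ^ α := by
  linarith [Real.self_le_rpow_of_le_one hD₀ hD₁ hα₁]

theorem add_mul_rpow_le_mul_rpow_sq {x D K₁ K₂ α : ℝ} (hx₀ : 0 ≤ x) (hx : x ≤ (1 + K₁) * D ^ α)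
    (hD₀ : 0 ≤ D) (hD₁ : D ≤ 1) (hK₁ : 0 ≤ K₁) (hK₂ : 0 ≤ K₂) (hα₀ : 0 ≤ α) (hα₁ : α ≤ 1) :
    x + K₂ * x ^ α ≤ (1 + K₁) * (1 + K₂) * D ^ (α ^ 2) := by
  have hDα : D ^ α ≤ D ^ (α ^ 2) :=
    Real.rpow_le_rpow_of_exponent_ge' hD₀ hD₁ (sq_nonneg α) (by nlinarith)
  have hxα : x ^ α ≤ (1 + K₁) * D ^ (α ^ 2) :=
    calc x ^ α ≤ ((1 + K₁) * D ^ α) ^ α := by gcongr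
      _ = (1 + K₁) ^ α * D ^ (α ^ 2) := by
        rw [Real.mul_rpow (by positivity) (by positivity), ← Real.rpow_mul hD₀, sq]
      _ ≤ (1 + K₁) * D ^ (α ^ 2) := by
        gcongr
        exact Real.rpow_le_self_of_one_le (by linarith) hα₁
  calc x + K₂ * x ^ α ≤ (1 + K₁) * D ^ (α ^ 2) + K₂ * ((1 + K₁) * D ^ (α ^ 2)) := by
        gcongr
        exact hx.trans (by gcongr)
    _ = (1 + K₁) * (1 + K₂) * D ^ (α ^ 2) := by ring

theorem dist_comp_le_mul_rpow_sq {X Y Z : Type*} [PseudoMetricSpace X] [PseudoMetricSpace Y]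
    [PseudoMetricSpace Z] {F : X → Y} {G : Y → Z} {K₁ K₂ α : ℝ} (hK₁ : 0 ≤ K₁) (hK₂ : 0 ≤ K₂)
    (hα₀ : 0 ≤ α) (hα₁ : α ≤ 1)
    (hF : ∀ p q, dist (F p) (F q) ≤ dist p q + K₁ * dist p q ^ α)
    (hG : ∀ p q, dist (G p) (G q) ≤ dist p q + K₂ * dist p q ^ α) {p q : X}
    (hpq : dist p q ≤ 1) :
    dist (G (F p)) (G (F q)) ≤ (1 + K₁) * (1 + K₂) * dist p q ^ (α ^ 2) :=
  (hG _ _).trans <| add_mul_rpow_le_mul_rpow_sq dist_nonneg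
    ((hF p q).trans (add_mul_rpow_le_one_add_mul_rpow dist_nonneg hpq hα₁))
    dist_nonneg hpq hK₁ hK₂ hα₀ hα₁

theorem exists_bi_holder_on_ball {X Y : Type*} [PseudoMetricSpace X] [PseudoMetricSpace Y]
    {Φ : X → Y} {Ψ : Y → X} (hΨΦ : LeftInverse Ψ Φ) {M β : ℝ} (hM : 1 ≤ M) (hβ₀ : 0 < β)
    (hβ₁ : β ≤ 1) (hΦ : ∀ p q, dist p q ≤ 1 → dist (Φ p) (Φ q) ≤ M * dist p q ^ β)
    (hΨ : ∀ p q, dist p q ≤ 1 → dist (Ψ p) (Ψ q) ≤ M * dist p q ^ β) (x₀ : X) :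
    ∃ L : ℝ, 1 ≤ L ∧ ∃ ε : ℝ, 0 < ε ∧ ∀ p ∈ ball x₀ ε, ∀ q ∈ ball x₀ ε,
      (1 / L) * dist p q ^ (1 / β) ≤ dist (Φ p) (Φ q) ∧ dist (Φ p) (Φ q) ≤ L * dist p q ^ β := by
  have hM₀ : 0 < M := by linarith
  have hs : 1 ≤ 1 / β := one_le_one_div hβ₀ hβ₁
  refine ⟨M ^ (1 / β), Real.one_le_rpow hM (by linarith), M ^ (-(1 / β)) / 2, by positivity,
    fun p hp q hq => ?_⟩
  -- `M ^ (-1/β)` is the radius at which `M * D ^ β` reaches `1`.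
  have hD : dist p q ≤ M ^ (-(1 / β)) := by
    linarith [dist_triangle_right p q x₀, mem_ball.1 hp, mem_ball.1 hq]
  have hD₁ : dist p q ≤ 1 := hD.trans (Real.rpow_le_one_of_one_le_of_nonpos hM (by linarith))
  have hΦ_small : dist (Φ p) (Φ q) ≤ 1 :=
    calc dist (Φ p) (Φ q) ≤ M * dist p q ^ β := hΦ p q hD₁
      _ ≤ M * (M ^ (-(1 / β))) ^ β := by gcongr
      _ = 1 := by
        rw [← Real.rpow_mul hM₀.le, neg_mul, one_div_mul_cancel hβ₀.ne', Real.rpow_neg_one,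
          mul_inv_cancel₀ hM₀.ne']
  have hback : dist p q ≤ M * dist (Φ p) (Φ q) ^ β := by
    simpa only [hΨΦ p, hΨΦ q] using hΨ _ _ hΦ_small
  constructor
  · rw [div_mul_eq_mul_div, one_mul, div_le_iff₀ (by positivity), mul_comm]
    calc dist p q ^ (1 / β) ≤ (M * dist (Φ p) (Φ q) ^ β) ^ (1 / β) := by gcongr
      _ = M ^ (1 / β) * dist (Φ p) (Φ q) := by
        rw [Real.mul_rpow hM₀.le (by positivity), ← Real.rpow_mul dist_nonneg,
          mul_one_div_cancel hβ₀.ne', Real.rpow_one]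
  · calc dist (Φ p) (Φ q) ≤ M * dist p q ^ β := hΦ p q hD₁
      _ ≤ M ^ (1 / β) * dist p q ^ β := by
        gcongr
        exact Real.self_le_rpow_of_one_le hM hs

section Shear

variable {E F : Type*}

@[simps]
def shearFst [AddGroup E] (B : F → E) : E × F ≃ E × F where
  toFun p := (p.1 + B p.2, p.2)
  invFun p := (p.1 - B p.2, p.2)
  left_inv p := by simp
  right_inv p := by simp

@[simps]
def shearSnd [AddGroup F] (A : E → F) : E × F ≃ E × F where
  toFun p := (p.1, p.2 + A p.1)
  invFun p := (p.1, p.2 - A p.1)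
  left_inv p := by simp
  right_inv p := by simp

theorem shearFst_symm [AddGroup E] (B : F → E) : (shearFst B).symm = shearFst (-B) :=
  Equiv.ext fun _ => Prod.ext (sub_eq_add_neg _ _) rfl

theorem shearSnd_symm [AddGroup F] (A : E → F) : (shearSnd A).symm = shearSnd (-A) :=
  Equiv.ext fun _ => Prod.ext rfl (sub_eq_add_neg _ _)

theorem continuous_shearFst [AddGroup E] [TopologicalSpace E] [ContinuousAdd E]
    [TopologicalSpace F] {B : F → E} (hB : Continuous B) : Continuous (shearFst B) :=
  (continuous_fst.add (hB.comp continuous_snd)).prodMk continuous_snd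

theorem continuous_shearSnd [AddGroup F] [TopologicalSpace F] [ContinuousAdd F]
    [TopologicalSpace E] {A : E → F} (hA : Continuous A) : Continuous (shearSnd A) :=
  continuous_fst.prodMk (continuous_snd.add (hA.comp continuous_fst))

theorem dist_shearFst_le [SeminormedAddCommGroup E] [PseudoMetricSpace F] {B : F → E}
    {K r : ℝ≥0} (hB : HolderWith K r B) (p q : E × F) :
    dist (shearFst B p) (shearFst B q) ≤ dist p q + K * dist p q ^ (r : ℝ) := by
  have h₁ : dist p.1 q.1 ≤ dist p q := le_max_left _ _
  have h₂ : dist p.2 q.2 ≤ dist p q := le_max_right _ _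
  have hK : 0 ≤ (K : ℝ) * dist p q ^ (r : ℝ) := by positivity
  refine max_le ?_ (le_add_of_le_of_nonneg h₂ hK)
  calc dist (p.1 + B p.2) (q.1 + B q.2) ≤ dist p.1 q.1 + dist (B p.2) (B q.2) :=
        dist_add_add_le _ _ _ _
    _ ≤ dist p q + K * dist p q ^ (r : ℝ) :=
        add_le_add h₁ (hB.dist_le_of_le h₂)

theorem dist_shearSnd_le [PseudoMetricSpace E] [SeminormedAddCommGroup F] {A : E → F}
    {K r : ℝ≥0} (hA : HolderWith K r A) (p q : E × F) :
    dist (shearSnd A p) (shearSnd A q) ≤ dist p q + K * dist p q ^ (r : ℝ) := by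
  have h₁ : dist p.1 q.1 ≤ dist p q := le_max_left _ _
  have h₂ : dist p.2 q.2 ≤ dist p q := le_max_right _ _
  have hK : 0 ≤ (K : ℝ) * dist p q ^ (r : ℝ) := by positivity
  refine max_le (le_add_of_le_of_nonneg h₁ hK) ?_
  calc dist (p.2 + A p.1) (q.2 + A q.1) ≤ dist p.2 q.2 + dist (A p.1) (A q.1) :=
        dist_add_add_le _ _ _ _
    _ ≤ dist p q + K * dist p q ^ (r : ℝ) :=
        add_le_add h₂ (hA.dist_le_of_le h₁)

def shear [AddGroup E] [AddGroup F] (A : E → F) (B : F → E) : E × F ≃ E × F :=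
  (shearSnd A).trans (shearFst B).symm

theorem shear_apply [AddGroup E] [AddGroup F] (A : E → F) (B : F → E) (p : E × F) :
    shear A B p = (p.1 - B (p.2 + A p.1), p.2 + A p.1) :=
  rfl

section Topology

variable [AddGroup E] [TopologicalSpace E] [IsTopologicalAddGroup E]
  [AddGroup F] [TopologicalSpace F] [IsTopologicalAddGroup F] {A : E → F} {B : F → E}

theorem continuous_shear (hA : Continuous A) (hB : Continuous B) : Continuous (shear A B) := by
  rw [shear, Equiv.coe_trans, shearFst_symm]
  exact (continuous_shearFst hB.neg).comp (continuous_shearSnd hA)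

theorem continuous_shear_symm (hA : Continuous A) (hB : Continuous B) :
    Continuous (shear A B).symm := by
  rw [shear, Equiv.symm_trans, Equiv.symm_symm, Equiv.coe_trans, shearSnd_symm]
  exact (continuous_shearSnd hA.neg).comp (continuous_shearFst hB)

end Topology

section Seminormed

variable [SeminormedAddCommGroup E] [SeminormedAddCommGroup F] {A : E → F} {B : F → E}
  {K₁ K₂ r : ℝ≥0}

theorem dist_shear_le (hA : HolderWith K₁ r A) (hB : HolderWith K₂ r B) (hr : r ≤ 1)
    {p q : E × F} (hpq : dist p q ≤ 1) :
    dist (shear A B p) (shear A B q) ≤ (1 + K₁) * (1 + K₂) * dist p q ^ ((r : ℝ) ^ 2) := by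
  rw [shear, Equiv.coe_trans, shearFst_symm]
  exact dist_comp_le_mul_rpow_sq K₁.coe_nonneg K₂.coe_nonneg r.coe_nonneg (mod_cast hr)
    (dist_shearSnd_le hA) (dist_shearFst_le hB.neg) hpq

theorem dist_shear_symm_le (hA : HolderWith K₁ r A) (hB : HolderWith K₂ r B) (hr : r ≤ 1)
    {p q : E × F} (hpq : dist p q ≤ 1) :
    dist ((shear A B).symm p) ((shear A B).symm q) ≤
      (1 + K₁) * (1 + K₂) * dist p q ^ ((r : ℝ) ^ 2) := by
  rw [shear, Equiv.symm_trans, Equiv.symm_symm, Equiv.coe_trans, shearSnd_symm,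
    mul_comm (1 + (K₁ : ℝ))]
  exact dist_comp_le_mul_rpow_sq K₂.coe_nonneg K₁.coe_nonneg r.coe_nonneg (mod_cast hr)
    (dist_shearFst_le hB) (dist_shearSnd_le hA.neg) hpq

theorem exists_bi_holder_shear (hA : HolderWith K₁ r A) (hB : HolderWith K₂ r B) (hr₀ : 0 < r)
    (hr₁ : r ≤ 1) (p₀ : E × F) :
    ∃ L : ℝ, 1 ≤ L ∧ ∃ ε : ℝ, 0 < ε ∧ ∀ p ∈ ball p₀ ε, ∀ q ∈ ball p₀ ε,
      (1 / L) * dist p q ^ (1 / (r : ℝ) ^ 2) ≤ dist (shear A B p) (shear A B q) ∧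
        dist (shear A B p) (shear A B q) ≤ L * dist p q ^ ((r : ℝ) ^ 2) := by
  have hr₁' : (r : ℝ) ≤ 1 := mod_cast hr₁
  exact exists_bi_holder_on_ball (shear A B).left_inv
    (one_le_mul_of_one_le_of_one_le (by simp) (by simp)) (by positivity)
    (pow_le_one₀ r.coe_nonneg hr₁') (fun _ _ => dist_shear_le hA hB hr₁)
    (fun _ _ => dist_shear_symm_le hA hB hr₁) p₀

end Seminormed

end Shear

theorem stmt_10_general (n : ℕ)
    (X Y : Set (EuclideanSpace ℝ (Fin n)))
    (h g : EuclideanSpace ℝ (Fin n) → EuclideanSpace ℝ (Fin n))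
    (h0X : (0 : EuclideanSpace ℝ (Fin n)) ∈ X)
    (hh0 : h 0 = 0)
    (hmaps : ∀ x ∈ X, h x ∈ Y) (hgmaps : ∀ y ∈ Y, g y ∈ X)
    (hgh : ∀ x ∈ X, g (h x) = x) (hhg : ∀ y ∈ Y, h (g y) = y)
    (α L : ℝ) (hα : 0 < α) (hα1 : α ≤ 1) (hL : 1 ≤ L)
    (hHolder : ∀ x₁ ∈ X, ∀ x₂ ∈ X,
      (1 / L) * ‖x₁ - x₂‖ ^ (1 / α) ≤ ‖h x₁ - h x₂‖ ∧
      ‖h x₁ - h x₂‖ ≤ L * ‖x₁ - x₂‖ ^ α) :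
    ∃ Φ Ψ : EuclideanSpace ℝ (Fin n) × EuclideanSpace ℝ (Fin n) →
        EuclideanSpace ℝ (Fin n) × EuclideanSpace ℝ (Fin n),
      (∀ p, Ψ (Φ p) = p) ∧ (∀ p, Φ (Ψ p) = p) ∧ Φ 0 = 0 ∧
      Continuous Φ ∧ Continuous Ψ ∧
      (∃ L' : ℝ, 1 ≤ L' ∧ ∃ ε : ℝ, 0 < ε ∧
        ∀ p ∈ ball (0 : EuclideanSpace ℝ (Fin n) × EuclideanSpace ℝ (Fin n)) ε,
        ∀ q ∈ ball (0 : EuclideanSpace ℝ (Fin n) × EuclideanSpace ℝ (Fin n)) ε,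
          (1 / L') * ‖p - q‖ ^ (1 / α ^ 2) ≤ ‖Φ p - Φ q‖ ∧
          ‖Φ p - Φ q‖ ≤ L' * ‖p - q‖ ^ (α ^ 2)) ∧
      (∀ x ∈ X, Φ (x, 0) = (0, h x)) ∧
      Φ '' (X ×ˢ ({0} : Set (EuclideanSpace ℝ (Fin n)))) =
        ({0} : Set (EuclideanSpace ℝ (Fin n))) ×ˢ Y := by
  lift α to ℝ≥0 using hα.le
  lift L to ℝ≥0 using zero_le_one.trans hL
  have hα₀ : 0 < α := mod_cast hα
  have hα₁ : α ≤ 1 := mod_cast hα1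
  have hh : HolderOnWith L α h X := HolderOnWith.of_dist_le fun x₁ hx₁ x₂ hx₂ => by
    simpa only [dist_eq_norm] using (hHolder x₁ hx₁ x₂ hx₂).2
  have hg : HolderOnWith (L ^ (α : ℝ)) α g Y := by
    refine LeftInvOn.holderOnWith_of_rpow_inv_le hhg hgmaps hα₀ fun x₁ hx₁ x₂ hx₂ => ?_
    have hlow := (hHolder x₁ hx₁ x₂ hx₂).1
    rw [div_mul_eq_mul_div, one_mul, div_le_iff₀ (by linarith)] at hlow
    simpa only [dist_eq_norm, one_div, mul_comm (L : ℝ)] using hlow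
  obtain ⟨ht, ht_holder, ht_eq⟩ := hh.extend_finite_dimension hα₀ hα₁
  obtain ⟨kt, kt_holder, kt_eq⟩ := hg.extend_finite_dimension hα₀ hα₁
  have hΦX : ∀ x ∈ X, shear ht kt (x, 0) = (0, h x) := fun x hx => by
    simp [shear_apply, ← ht_eq hx, ← kt_eq (hmaps x hx), hgh x hx]
  have hΦ0 : shear ht kt 0 = 0 := by rw [← Prod.mk_zero_zero, hΦX 0 h0X, hh0]
  obtain ⟨L', hL', ε, hε, hbi⟩ := exists_bi_holder_shear ht_holder kt_holder hα₀ hα₁ 0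
  have hY : h '' X = Y := (LeftInvOn.surjOn hhg hgmaps).image_eq_of_mapsTo hmaps
  refine ⟨shear ht kt, (shear ht kt).symm, (shear ht kt).symm_apply_apply,
    (shear ht kt).apply_symm_apply, hΦ0,
    continuous_shear (ht_holder.continuous hα₀) (kt_holder.continuous hα₀),
    continuous_shear_symm (ht_holder.continuous hα₀) (kt_holder.continuous hα₀),
    ⟨L', hL', ε, hε, by simpa only [dist_eq_norm] using hbi⟩, hΦX, ?_⟩
  rw [← hY, prod_singleton, singleton_prod, image_image, image_image]
  exact image_congr hΦX

/-- a bi-α-Hölder homeomorphism between germs (X,0), (Y,0) in ℝⁿ extends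
to a bi-α²-Hölder homeomorphism Φ of (ℝ²ⁿ,0) with Φ(X × {0}) = {0} × Y and
Φ(x,0) = (0, h(x)) near 0. -/
theorem stmt_10 (n : ℕ)
    (X Y : Set (EuclideanSpace ℝ (Fin n)))
    (h g : EuclideanSpace ℝ (Fin n) → EuclideanSpace ℝ (Fin n))
    (h0X : (0 : EuclideanSpace ℝ (Fin n)) ∈ X)
    (h0Y : (0 : EuclideanSpace ℝ (Fin n)) ∈ Y)
    (hh0 : h 0 = 0)
    (hmaps : ∀ x ∈ X, h x ∈ Y) (hgmaps : ∀ y ∈ Y, g y ∈ X)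
    (hgh : ∀ x ∈ X, g (h x) = x) (hhg : ∀ y ∈ Y, h (g y) = y)
    (α L : ℝ) (hα : 0 < α) (hα1 : α ≤ 1) (hL : 1 ≤ L)
    (hHolder : ∀ x₁ ∈ X, ∀ x₂ ∈ X,
      (1 / L) * ‖x₁ - x₂‖ ^ (1 / α) ≤ ‖h x₁ - h x₂‖ ∧
      ‖h x₁ - h x₂‖ ≤ L * ‖x₁ - x₂‖ ^ α) :
    ∃ Φ Ψ : EuclideanSpace ℝ (Fin n) × EuclideanSpace ℝ (Fin n) →
        EuclideanSpace ℝ (Fin n) × EuclideanSpace ℝ (Fin n),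
      (∀ p, Ψ (Φ p) = p) ∧ (∀ p, Φ (Ψ p) = p) ∧ Φ 0 = 0 ∧
      Continuous Φ ∧ Continuous Ψ ∧
      (∃ L' : ℝ, 1 ≤ L' ∧ ∃ ε : ℝ, 0 < ε ∧
        ∀ p ∈ ball (0 : EuclideanSpace ℝ (Fin n) × EuclideanSpace ℝ (Fin n)) ε,
        ∀ q ∈ ball (0 : EuclideanSpace ℝ (Fin n) × EuclideanSpace ℝ (Fin n)) ε,
          (1 / L') * ‖p - q‖ ^ (1 / α ^ 2) ≤ ‖Φ p - Φ q‖ ∧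
          ‖Φ p - Φ q‖ ≤ L' * ‖p - q‖ ^ (α ^ 2)) ∧
      (∀ x ∈ X, Φ (x, 0) = (0, h x)) ∧
      Φ '' (X ×ˢ ({0} : Set (EuclideanSpace ℝ (Fin n)))) =
        ({0} : Set (EuclideanSpace ℝ (Fin n))) ×ˢ Y :=
  stmt_10_general n X Y h g h0X hh0 hmaps hgmaps hgh hhg α L hα hα1 hL hHolder
end

section
/- Let X ⊆ ℝⁿ be a set with 0 ∈ closure(X), and suppose X and Y ⊆ ℝⁿ are ST-equivalent at 0: there exist d₁, d₂ > 1 and C₁, C₂ > 0 with Y ⊆ ST_{d₁}(X,C₁) and X ⊆ ST_{d₂}(Y,C₂) as germs at 0. Then the tangent cones agree: C₀(X) = C₀(Y), where C₀(X) := {v ∈ ℝⁿ : ∃ sequences xₖ ∈ X, xₖ → 0, λₖ > 0 with λₖxₖ → v}. -/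
/-!
If `yₖ ∈ Y` with `λₖ yₖ → v` and `xₖ ∈ X` is within `C‖yₖ‖^d` of `yₖ`, then after rescaling
`λₖ ‖xₖ - yₖ‖ ≤ C (λₖ‖yₖ‖) ‖yₖ‖^(d-1) → C ‖v‖ · 0 = 0` because `d > 1`, so `λₖ xₖ → v` as well.
-/

open Metric Set Filter Topology

/-- The tangent cone of `X ⊆ ℝⁿ` at `0`: limits `v = lim λₖ xₖ` with `xₖ ∈ X`,
`xₖ → 0`, `λₖ > 0`. -/
def tangentConeAtZero {n : ℕ} (X : Set (EuclideanSpace ℝ (Fin n))) :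
    Set (EuclideanSpace ℝ (Fin n)) :=
  {v | ∃ (x : ℕ → EuclideanSpace ℝ (Fin n)) (l : ℕ → ℝ),
    (∀ k, x k ∈ X) ∧ Tendsto x atTop (𝓝 0) ∧ (∀ k, 0 < l k) ∧
    Tendsto (fun k => l k • x k) atTop (𝓝 v)}

lemma exists_seq_mem_dist_lt_infDist_add {ι α : Type*} [PseudoMetricSpace α] {X : Set α}
    (hX : X.Nonempty) (y : ι → α) {δ : ι → ℝ} (hδ : ∀ k, 0 < δ k) :
    ∃ x : ι → α, (∀ k, x k ∈ X) ∧ ∀ k, dist (y k) (x k) < infDist (y k) X + δ k := by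
  have hx : ∀ k, ∃ x ∈ X, dist (y k) x < infDist (y k) X + δ k := fun k =>
    (infDist_lt_iff hX).1 (lt_add_of_pos_right _ (hδ k))
  choose x hxX hxy using hx
  exact ⟨x, hxX, hxy⟩

lemma tendsto_mul_norm_rpow_of_tendsto_smul {ι E : Type*} [NormedAddCommGroup E]
    [NormedSpace ℝ E] {L : Filter ι} {l : ι → ℝ} {y : ι → E} {v : E} {d : ℝ}
    (hl : ∀ k, 0 ≤ l k) (hy : Tendsto y L (𝓝 0)) (hv : Tendsto (fun k => l k • y k) L (𝓝 v))
    (hd : 1 < d) : Tendsto (fun k => l k * ‖y k‖ ^ d) L (𝓝 0) := by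
  have hsplit : ∀ k, l k * ‖y k‖ ^ d = ‖l k • y k‖ * ‖y k‖ ^ (d - 1) := fun k => by
    rw [norm_smul, Real.norm_of_nonneg (hl k), mul_assoc, ← Real.rpow_one_add' (norm_nonneg _)
      (by linarith), add_sub_cancel]
  have hlim := hv.norm.mul (hy.norm.rpow_const (Or.inr (sub_pos.2 hd).le))
  simp only [norm_zero, Real.zero_rpow (sub_pos.2 hd).ne', mul_zero] at hlim
  simpa only [hsplit] using hlim

lemma tangentConeAtZero_subset_of_infDist_le {n : ℕ} {X Y : Set (EuclideanSpace ℝ (Fin n))}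
    (hX : X.Nonempty) {d C ε : ℝ} (hd : 1 < d) (hε : 0 < ε)
    (hYX : ∀ y ∈ Y ∩ ball 0 ε, infDist y X ≤ C * ‖y‖ ^ d) :
    tangentConeAtZero Y ⊆ tangentConeAtZero X := by
  rintro v ⟨y, l, hyY, hy0, hl, hlv⟩
  -- The slack `δ k` in choosing near-nearest points must vanish before and after rescaling by `l k`.
  set δ : ℕ → ℝ := fun k => 1 / ((k + 1) * (1 + l k))
  have hδ : ∀ k, 0 < δ k := fun k => by have := hl k; positivity
  have hδ_le : ∀ k, δ k ≤ 1 / (k + 1) := fun k => by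
    have := hl k
    exact one_div_le_one_div_of_le (by positivity) (by nlinarith)
  have hlδ_le : ∀ k, l k * δ k ≤ 1 / (k + 1) := fun k => by
    have := hl k
    rw [mul_one_div, div_le_div_iff₀ (by positivity) (by positivity)]
    nlinarith
  obtain ⟨x, hxX, hxy⟩ := exists_seq_mem_dist_lt_infDist_add hX y hδ
  have hnear : ∀ᶠ k in atTop, infDist (y k) X ≤ C * ‖y k‖ ^ d :=
    (hy0.eventually (ball_mem_nhds 0 hε)).mono fun k hk => hYX _ ⟨hyY k, hk⟩
  have hyd : Tendsto (fun k => ‖y k‖ ^ d) atTop (𝓝 0) := by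
    simpa [Real.zero_rpow (by linarith : d ≠ 0)] using
      hy0.norm.rpow_const (Or.inr (by linarith : (0 : ℝ) ≤ d))
  have hdist : Tendsto (fun k => dist (y k) (x k)) atTop (𝓝 0) := by
    refine squeeze_zero' (.of_forall fun _ => dist_nonneg)
      (hnear.mono fun k hk => (hxy k).le.trans (add_le_add hk (hδ_le k))) ?_
    simpa using (hyd.const_mul C).add tendsto_one_div_add_atTop_nhds_zero_nat
  have hldist : Tendsto (fun k => l k * dist (y k) (x k)) atTop (𝓝 0) := by
    refine squeeze_zero' (g := fun k => C * (l k * ‖y k‖ ^ d) + 1 / (k + 1))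
      (.of_forall fun k => mul_nonneg (hl k).le dist_nonneg) (hnear.mono fun k hk => ?_) ?_
    · calc l k * dist (y k) (x k) ≤ l k * (C * ‖y k‖ ^ d + δ k) :=
            mul_le_mul_of_nonneg_left ((hxy k).le.trans (add_le_add_left hk _)) (hl k).le
        _ ≤ C * (l k * ‖y k‖ ^ d) + 1 / (k + 1) := by nlinarith [hlδ_le k]
    · simpa using ((tendsto_mul_norm_rpow_of_tendsto_smul (fun k => (hl k).le) hy0 hlv hd).const_mul
        C).add tendsto_one_div_add_atTop_nhds_zero_nat
  refine ⟨x, l, hxX, hy0.congr_dist hdist, hl, hlv.congr_dist ?_⟩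
  simpa only [dist_smul₀, Real.norm_of_nonneg (hl _).le] using hldist

theorem stmt_13_general (n : ℕ) (X Y : Set (EuclideanSpace ℝ (Fin n)))
    (hX : (0 : EuclideanSpace ℝ (Fin n)) ∈ closure X)
    (hY : (0 : EuclideanSpace ℝ (Fin n)) ∈ closure Y)
    (d₁ d₂ C₁ C₂ : ℝ) (hd₁ : 1 < d₁) (hd₂ : 1 < d₂)
    (ε : ℝ) (hε : 0 < ε)
    (hYX : ∀ y ∈ Y ∩ ball (0 : EuclideanSpace ℝ (Fin n)) ε,
      Metric.infDist y X ≤ C₁ * ‖y‖ ^ d₁)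
    (hXY : ∀ x ∈ X ∩ ball (0 : EuclideanSpace ℝ (Fin n)) ε,
      Metric.infDist x Y ≤ C₂ * ‖x‖ ^ d₂) :
    tangentConeAtZero X = tangentConeAtZero Y :=
  (tangentConeAtZero_subset_of_infDist_le (Nonempty.of_closure ⟨0, hY⟩) hd₂ hε hXY).antisymm
    (tangentConeAtZero_subset_of_infDist_le (Nonempty.of_closure ⟨0, hX⟩) hd₁ hε hYX)

/-- ST-equivalent germs at 0 have the same tangent cone. -/
theorem stmt_13 (n : ℕ) (X Y : Set (EuclideanSpace ℝ (Fin n)))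
    (hX : (0 : EuclideanSpace ℝ (Fin n)) ∈ closure X)
    (hY : (0 : EuclideanSpace ℝ (Fin n)) ∈ closure Y)
    (d₁ d₂ C₁ C₂ : ℝ) (hd₁ : 1 < d₁) (hd₂ : 1 < d₂) (hC₁ : 0 < C₁) (hC₂ : 0 < C₂)
    (ε : ℝ) (hε : 0 < ε)
    (hYX : ∀ y ∈ Y ∩ ball (0 : EuclideanSpace ℝ (Fin n)) ε,
      Metric.infDist y X ≤ C₁ * ‖y‖ ^ d₁)
    (hXY : ∀ x ∈ X ∩ ball (0 : EuclideanSpace ℝ (Fin n)) ε,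
      Metric.infDist x Y ≤ C₂ * ‖x‖ ^ d₂) :
    tangentConeAtZero X = tangentConeAtZero Y :=
  stmt_13_general n X Y hX hY d₁ d₂ C₁ C₂ hd₁ hd₂ ε hε hYX hXY
end

section
/- Let X = ℝ × {0} ⊆ ℝ² and Y = {(x, |x·log|x||) : x ≠ 0} ∪ {(0,0)} ⊆ ℝ². Define h : X → Y by h(0)=(0,0) and h(x) = (x, |x log|x||) for x ≠ 0. Then for every α ∈ (0,1) the map h is bi-α-Hölder near 0: there is L ≥ 1 such that (1/L)|x₁-x₂|^{1/α} ≤ ‖h(x₁)-h(x₂)‖ ≤ L|x₁-x₂|^α for all x₁, x₂ sufficiently small. -/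
open Metric Set

/-!
On `[-1, 1]` we have `|x log |x|| = negMulLog |x|`. For `0 ≤ b ≤ a ≤ 1` and `d = a - b`, splitting
`a log a - b log b = (a - b) log a + b log (a / b)` gives
`-d ≤ negMulLog a - negMulLog b ≤ negMulLog d`, and `log u ≤ u ^ ε / ε` at `u = 1 / d`,
`ε = 1 - α` gives `negMulLog d ≤ d ^ α / (1 - α)`. So `h` is `α`-Hölder with constant
`1 / (1 - α)`; since its first coordinate is the identity, the lower bound only needs
`|x₁ - x₂| ^ (1 / α) ≤ |x₁ - x₂|` for `|x₁ - x₂| ≤ 1`.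
-/

namespace Real

lemma negMulLog_le_rpow_div {α t : ℝ} (hα : α < 1) (ht : 0 ≤ t) :
    negMulLog t ≤ t ^ α / (1 - α) := by
  rcases ht.eq_or_lt with rfl | ht
  · simp only [negMulLog_zero]
    exact div_nonneg (rpow_nonneg le_rfl α) (by linarith)
  have hpow : t * t⁻¹ ^ (1 - α) = t ^ α := by
    rw [inv_rpow ht.le, ← rpow_neg ht.le, neg_sub, rpow_sub_one ht.ne']
    field_simp
  calc negMulLog t = t * log t⁻¹ := by rw [negMulLog, log_inv]; ring
    _ ≤ t * (t⁻¹ ^ (1 - α) / (1 - α)) := by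
      gcongr
      exact log_le_rpow_div (inv_nonneg.2 ht.le) (by linarith)
    _ = t ^ α / (1 - α) := by rw [← hpow, mul_div_assoc]

lemma negMulLog_sub_negMulLog_le {a b : ℝ} (hb : 0 ≤ b) (hba : b ≤ a) :
    negMulLog a - negMulLog b ≤ negMulLog (a - b) := by
  rcases hb.eq_or_lt with rfl | hb
  · simp
  rcases hba.eq_or_lt with rfl | hba
  · simp
  have hlog_ab : log b ≤ log a := log_le_log hb hba.le
  have hlog_d : log (a - b) ≤ log a := log_le_log (by linarith) (by linarith)
  calc negMulLog a - negMulLog b = -((a - b) * log a) - b * (log a - log b) := by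
        simp only [negMulLog]; ring
    _ ≤ -((a - b) * log (a - b)) := by nlinarith
    _ = negMulLog (a - b) := by rw [negMulLog]; ring

lemma negMulLog_sub_negMulLog_le_sub {a b : ℝ} (hb : 0 ≤ b) (hba : b ≤ a) (ha : a ≤ 1) :
    negMulLog b - negMulLog a ≤ a - b := by
  have hlog_a : log a ≤ 0 := log_nonpos (hb.trans hba) ha
  rcases hb.eq_or_lt with rfl | hb
  · simp only [negMulLog]
    nlinarith [hba]
  have hlog_div : b * log (a / b) ≤ a - b := by
    have := mul_le_mul_of_nonneg_left (log_le_sub_one_of_pos (div_pos (hb.trans_le hba) hb)) hb.le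
    rwa [mul_sub, mul_div_cancel₀ _ hb.ne', mul_one] at this
  rw [log_div (hb.trans_le hba).ne' hb.ne'] at hlog_div
  calc negMulLog b - negMulLog a = (a - b) * log a + b * (log a - log b) := by
        simp only [negMulLog]; ring
    _ ≤ a - b := by nlinarith

lemma abs_negMulLog_sub_le_of_le {α a b : ℝ} (hα₀ : 0 < α) (hα₁ : α < 1)
    (hb : 0 ≤ b) (hba : b ≤ a) (ha : a ≤ 1) :
    |negMulLog a - negMulLog b| ≤ (a - b) ^ α / (1 - α) := by
  have hd₀ : 0 ≤ a - b := sub_nonneg.2 hba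
  have hd_le : a - b ≤ (a - b) ^ α / (1 - α) :=
    (self_le_rpow_of_le_one hd₀ (by linarith) hα₁.le).trans
      (le_div_self (rpow_nonneg hd₀ α) (by linarith) (by linarith))
  rw [abs_sub_le_iff]
  exact ⟨(negMulLog_sub_negMulLog_le hb hba).trans (negMulLog_le_rpow_div hα₁ hd₀),
    (negMulLog_sub_negMulLog_le_sub hb hba ha).trans hd_le⟩

lemma abs_negMulLog_sub_le {α a b : ℝ} (hα₀ : 0 < α) (hα₁ : α < 1)
    (ha : a ∈ Icc (0 : ℝ) 1) (hb : b ∈ Icc (0 : ℝ) 1) :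
    |negMulLog a - negMulLog b| ≤ |a - b| ^ α / (1 - α) := by
  rcases le_total b a with hba | hab
  · rw [abs_of_nonneg (sub_nonneg.2 hba)]
    exact abs_negMulLog_sub_le_of_le hα₀ hα₁ hb.1 hba ha.2
  · rw [abs_sub_comm, abs_sub_comm a, abs_of_nonneg (sub_nonneg.2 hab)]
    exact abs_negMulLog_sub_le_of_le hα₀ hα₁ ha.1 hab hb.2

lemma abs_mul_log_abs_eq_negMulLog {x : ℝ} (hx : |x| ≤ 1) :
    abs (x * log |x|) = negMulLog |x| := by
  rw [abs_mul, abs_of_nonpos (log_nonpos (abs_nonneg x) hx), negMulLog]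
  ring

lemma abs_abs_mul_log_abs_sub_le {α x y : ℝ} (hα₀ : 0 < α) (hα₁ : α < 1)
    (hx : |x| ≤ 1) (hy : |y| ≤ 1) :
    |abs (x * log |x|) - abs (y * log |y|)| ≤ |x - y| ^ α / (1 - α) := by
  rw [abs_mul_log_abs_eq_negMulLog hx, abs_mul_log_abs_eq_negMulLog hy]
  refine (abs_negMulLog_sub_le hα₀ hα₁ ⟨abs_nonneg x, hx⟩ ⟨abs_nonneg y, hy⟩).trans ?_
  gcongr ?_ ^ α / _
  exact abs_abs_sub_abs_le_abs_sub x y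

end Real

/-- the map h(x) = (x, |x log|x||) is bi-α-Hölder near 0 for every
α ∈ (0,1). (Here |0 · log 0| = 0, consistent with Lean's `Real.log 0 = 0`.) -/
theorem stmt_15 :
    let f : ℝ → ℝ := fun x => abs (x * Real.log (abs x))
    let h : ℝ → ℝ × ℝ := fun x => (x, f x)
    ∀ α : ℝ, 0 < α → α < 1 →
      ∃ L : ℝ, 1 ≤ L ∧ ∃ ε : ℝ, 0 < ε ∧
        ∀ x₁ ∈ ball (0 : ℝ) ε, ∀ x₂ ∈ ball (0 : ℝ) ε,
          (1 / L) * |x₁ - x₂| ^ (1 / α) ≤ ‖h x₁ - h x₂‖ ∧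
          ‖h x₁ - h x₂‖ ≤ L * |x₁ - x₂| ^ α := by
  intro f h α hα₀ hα₁
  have hL : 1 ≤ 1 / (1 - α) := one_le_one_div (by linarith) (by linarith)
  refine ⟨1 / (1 - α), hL, 1 / 2, by norm_num, fun x₁ hx₁ x₂ hx₂ => ?_⟩
  rw [mem_ball_zero_iff, Real.norm_eq_abs] at hx₁ hx₂
  set d := |x₁ - x₂|
  have hd₀ : 0 ≤ d := abs_nonneg _
  have hd₁ : d ≤ 1 := (abs_sub _ _).trans (by linarith)
  have hnorm : ‖h x₁ - h x₂‖ = max d |f x₁ - f x₂| := rfl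
  rw [hnorm]
  constructor
  · calc 1 / (1 / (1 - α)) * d ^ (1 / α) ≤ 1 * d := by
          gcongr
          · exact div_le_one_of_le₀ hL (by linarith)
          · exact Real.rpow_le_self_of_le_one hd₀ hd₁ (by rw [le_div_iff₀ hα₀]; linarith)
      _ ≤ max d |f x₁ - f x₂| := by rw [one_mul]; exact le_max_left _ _
  · refine max_le ?_ ?_
    · calc d ≤ 1 * d ^ α := by rw [one_mul]; exact Real.self_le_rpow_of_le_one hd₀ hd₁ hα₁.le
        _ ≤ 1 / (1 - α) * d ^ α := by gcongr
    · calc |f x₁ - f x₂| ≤ d ^ α / (1 - α) :=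
            Real.abs_abs_mul_log_abs_sub_le hα₀ hα₁ (by linarith) (by linarith)
        _ = 1 / (1 - α) * d ^ α := by ring
end

section
/- Let X ⊆ ℝⁿ contain 0 and suppose for some r₀ > 0 and for each ε ∈ (0, r₀] there is a homeomorphism H : cone over (S(0,ε) ∩ X) → closed B(0,ε) ∩ X preserving distance to 0, such that r_s(x) := H(s·H⁻¹(x)) satisfies: r_s is well defined, r_s(B̄(0,ε)∩X) = B̄(0,sε)∩X, and r_s⁻¹ is Lipschitz with constant at most K/s for a constant K independent of s ∈ (0,1]. Then there is a constant M > 0 such that for all 0 < r < ρ ≤ r₀, vol_k(X ∩ B(0,ρ)) ≤ M·(ρ/r)^k · vol_k(X ∩ B(0,r)), where k = dim(X,0). -/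
open Metric Set MeasureTheory

/-! Rescaling along the conic structure at scale `s = r / ρ`, the inverse retraction maps
`X ∩ B̄(0, r)` onto `X ∩ B̄(0, ρ)` with Lipschitz constant `K / s = K ρ / r`, and an `L`-Lipschitz
map multiplies `k`-dimensional Hausdorff measure by at most `L ^ k`. -/

theorem hausdorffMeasure_le_of_lipschitzOn_image_eq {X Y : Type*} [MetricSpace X]
    [MeasurableSpace X] [BorelSpace X] [MetricSpace Y] [MeasurableSpace Y] [BorelSpace Y]
    {f : X → Y} {A : Set X} {B : Set Y} {L : ℝ} (hL : 0 ≤ L)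
    (hf : ∀ x ∈ A, ∀ y ∈ A, dist (f x) (f y) ≤ L * dist x y) (hfAB : f '' A = B) (d : ℕ) :
    μH[d] B ≤ ENNReal.ofReal (L ^ d) * μH[d] A := by
  have h := (LipschitzOnWith.of_dist_le' hf).hausdorffMeasure_image_le (d := d) d.cast_nonneg
  rw [hfAB, ENNReal.rpow_natCast] at h
  rwa [ENNReal.ofReal_pow hL]

theorem stmt_18_general (n k : ℕ) (X : Set (EuclideanSpace ℝ (Fin n)))
    (r₀ : ℝ)
    (K : ℝ) (hK : 0 < K)
    (hconic : ∀ ε : ℝ, 0 < ε → ε ≤ r₀ → ∀ s : ℝ, 0 < s → s ≤ 1 →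
      ∃ Q : EuclideanSpace ℝ (Fin n) → EuclideanSpace ℝ (Fin n),
        (∀ y₁ ∈ closedBall (0 : EuclideanSpace ℝ (Fin n)) (s * ε) ∩ X,
         ∀ y₂ ∈ closedBall (0 : EuclideanSpace ℝ (Fin n)) (s * ε) ∩ X,
          ‖Q y₁ - Q y₂‖ ≤ (K / s) * ‖y₁ - y₂‖) ∧
        Q '' (closedBall (0 : EuclideanSpace ℝ (Fin n)) (s * ε) ∩ X) =
          closedBall (0 : EuclideanSpace ℝ (Fin n)) ε ∩ X) :
    ∃ M : ℝ, 0 < M ∧ ∀ r ρ : ℝ, 0 < r → r < ρ → ρ ≤ r₀ →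
      μH[(k : ℝ)] (X ∩ closedBall (0 : EuclideanSpace ℝ (Fin n)) ρ) ≤
        ENNReal.ofReal (M * (ρ / r) ^ (k : ℕ)) *
          μH[(k : ℝ)] (X ∩ closedBall (0 : EuclideanSpace ℝ (Fin n)) r) := by
  refine ⟨K ^ k, pow_pos hK k, fun r ρ hr hrρ hρr₀ => ?_⟩
  have hρ : 0 < ρ := hr.trans hrρ
  obtain ⟨Q, hQ_lip, hQ_image⟩ :=
    hconic ρ hρ hρr₀ (r / ρ) (div_pos hr hρ) ((div_le_one hρ).2 hrρ.le)
  rw [div_mul_cancel₀ r hρ.ne'] at hQ_lip hQ_image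
  have hscale : K ^ k * (ρ / r) ^ k = (K / (r / ρ)) ^ k := by
    rw [div_div_eq_mul_div, mul_div_assoc, mul_pow]
  rw [hscale, inter_comm X, inter_comm X]
  exact hausdorffMeasure_le_of_lipschitzOn_image_eq (by positivity)
    (by simpa only [dist_eq_norm] using hQ_lip) hQ_image k

/-- if X admits a Lipschitz conic structure near 0 — for each scale
ε ≤ r₀ and each s ∈ (0,1] an inverse retraction Q mapping X ∩ B̄(0,sε) onto
X ∩ B̄(0,ε) with Lipschitz constant at most K/s — then
vol_k(X ∩ B̄(0,ρ)) ≤ M (ρ/r)^k vol_k(X ∩ B̄(0,r)) for all 0 < r < ρ ≤ r₀. -/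
theorem stmt_18 (n k : ℕ) (X : Set (EuclideanSpace ℝ (Fin n)))
    (h0 : (0 : EuclideanSpace ℝ (Fin n)) ∈ X)
    (r₀ : ℝ) (hr₀ : 0 < r₀)
    (K : ℝ) (hK : 0 < K)
    (hconic : ∀ ε : ℝ, 0 < ε → ε ≤ r₀ → ∀ s : ℝ, 0 < s → s ≤ 1 →
      ∃ Q : EuclideanSpace ℝ (Fin n) → EuclideanSpace ℝ (Fin n),
        (∀ y₁ ∈ closedBall (0 : EuclideanSpace ℝ (Fin n)) (s * ε) ∩ X,
         ∀ y₂ ∈ closedBall (0 : EuclideanSpace ℝ (Fin n)) (s * ε) ∩ X,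
          ‖Q y₁ - Q y₂‖ ≤ (K / s) * ‖y₁ - y₂‖) ∧
        Q '' (closedBall (0 : EuclideanSpace ℝ (Fin n)) (s * ε) ∩ X) =
          closedBall (0 : EuclideanSpace ℝ (Fin n)) ε ∩ X) :
    ∃ M : ℝ, 0 < M ∧ ∀ r ρ : ℝ, 0 < r → r < ρ → ρ ≤ r₀ →
      μH[(k : ℝ)] (X ∩ closedBall (0 : EuclideanSpace ℝ (Fin n)) ρ) ≤
        ENNReal.ofReal (M * (ρ / r) ^ (k : ℕ)) *
          μH[(k : ℝ)] (X ∩ closedBall (0 : EuclideanSpace ℝ (Fin n)) r) :=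
  stmt_18_general n k X r₀ K hK hconic
end
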